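/- Let γ > β ≥ 1 and q > β. Define σ = q(q−1)/(q−β), q_γ = q − 1 + γ, and q' = (σq + β(q_γ − σ)) / ((q−β)(q_γ − σ)). Then σ < q_γ, and lim_{q→∞} q'/q = 1/(γ−β). -/

import Mathlib

/-!
Both claims rest on the identity `q_γ - σ = ((γ - β) q - β (γ - 1)) / (q - β)`.
For the limit, substituting `t = 1/q` turns `q'/q` into a rational function of `t`
that is continuous at `0`, with value `1/(γ - β)` there.
-/

open Filter Topology

noncomputable def sigma (β q : ℝ) : ℝ := q * (q - 1) / (q - β)

def qGamma (γ q : ℝ) : ℝ := q - 1 + γ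

noncomputable def qPrime (γ β q : ℝ) : ℝ :=
  (sigma β q * q + β * (qGamma γ q - sigma β q)) / ((q - β) * (qGamma γ q - sigma β q))

section

variable {γ β q : ℝ}

theorem qGamma_sub_sigma (hq : q ≠ β) :
    qGamma γ q - sigma β q = ((γ - β) * q - β * (γ - 1)) / (q - β) := by
  have : q - β ≠ 0 := sub_ne_zero.mpr hq
  unfold qGamma sigma
  field_simp
  ring

theorem sigma_lt_qGamma (hβγ : β < γ) (hq : max β (β * (γ - 1) / (γ - β)) < q) :
    sigma β q < qGamma γ q := by
  obtain ⟨hqβ, hq⟩ := max_lt_iff.mp hq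
  have hgap : 0 < (γ - β) * q - β * (γ - 1) := by
    rw [div_lt_iff₀ (sub_pos.mpr hβγ)] at hq
    linarith
  rw [← sub_pos, qGamma_sub_sigma hqβ.ne']
  exact div_pos hgap (sub_pos.mpr hqβ)

theorem qPrime_div_self (hqβ : q ≠ β) (hq : q ≠ 0) (hgap : (γ - β) * q - β * (γ - 1) ≠ 0) :
    qPrime γ β q / q =
      (1 - q⁻¹ + β * (γ - β) * q⁻¹ ^ 2 - β ^ 2 * (γ - 1) * q⁻¹ ^ 3) /
        ((1 - β * q⁻¹) * ((γ - β) - β * (γ - 1) * q⁻¹)) := by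
  have hsub : q - β ≠ 0 := sub_ne_zero.mpr hqβ
  have hd₁ : 1 - β * q⁻¹ = (q - β) / q := by field_simp
  have hd₂ : (γ - β) - β * (γ - 1) * q⁻¹ = ((γ - β) * q - β * (γ - 1)) / q := by field_simp
  unfold qPrime
  rw [qGamma_sub_sigma hqβ, sigma, hd₁, hd₂]
  field_simp
  ring

end

theorem tendsto_qPrime_div_self {γ β : ℝ} (hγβ : γ ≠ β) :
    Tendsto (fun q => qPrime γ β q / q) atTop (𝓝 (1 / (γ - β))) := by
  replace hγβ : γ - β ≠ 0 := sub_ne_zero.mpr hγβ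
  have hcont : ContinuousAt (fun t : ℝ =>
      (1 - t + β * (γ - β) * t ^ 2 - β ^ 2 * (γ - 1) * t ^ 3) /
        ((1 - β * t) * ((γ - β) - β * (γ - 1) * t))) 0 :=
    ContinuousAt.div (by fun_prop) (by fun_prop) (by simpa using hγβ)
  refine (by simpa using hcont.tendsto.comp tendsto_inv_atTop_zero :
    Tendsto _ atTop (𝓝 (1 / (γ - β)))).congr' ?_
  filter_upwards [eventually_ne_atTop β, eventually_ne_atTop 0,
    eventually_ne_atTop (β * (γ - 1) / (γ - β))] with q hqβ hq hgap
  refine (qPrime_div_self hqβ hq fun h => hgap ?_).symm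
  exact (eq_div_iff hγβ).mpr (by linarith)

theorem sigma_lt_and_limit_general (γ β : ℝ) (hβγ : β < γ) :
    (∀ q : ℝ, max β (β * (γ - 1) / (γ - β)) < q →
        q * (q - 1) / (q - β) < q - 1 + γ) ∧
    Tendsto
      (fun q : ℝ =>
        ((q * (q - 1) / (q - β)) * q
            + β * ((q - 1 + γ) - q * (q - 1) / (q - β))) /
          ((q - β) * ((q - 1 + γ) - q * (q - 1) / (q - β))) / q)
      atTop (nhds (1 / (γ - β))) :=
  ⟨fun _ => sigma_lt_qGamma hβγ, tendsto_qPrime_div_self hβγ.ne'⟩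

theorem sigma_lt_and_limit (γ β : ℝ) (hβ : 1 ≤ β) (hβγ : β < γ) :
    (∀ q : ℝ, max β (β * (γ - 1) / (γ - β)) < q →
        q * (q - 1) / (q - β) < q - 1 + γ) ∧
    Tendsto
      (fun q : ℝ =>
        ((q * (q - 1) / (q - β)) * q
            + β * ((q - 1 + γ) - q * (q - 1) / (q - β))) /
          ((q - β) * ((q - 1 + γ) - q * (q - 1) / (q - β))) / q)
      atTop (nhds (1 / (γ - β))) :=
  sigma_lt_and_limit_general γ β hβγ
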